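/- arXiv:1102.2818 — 4 statements merged into one kernel-verified Lean document; each statement's English description precedes it below -/
import Mathlib

section
/- Let (E, ℰ, μ) be a probability space, p ∈ [1, ∞), and let w : ℝ₊ → ℝ₊ be a nondecreasing, nonnegative concave function with w(0) = 0. Then for every h ∈ L^p(μ), the L^p norm of w(|h|) satisfies ‖w(|h|)‖_p ≤ 2^{1/p} · w(‖h‖_p). -/
/-!
Fix `M > 0`. For `t ≤ M` monotonicity gives `w t ≤ w M`; for `t ≥ M` concavity and `w 0 = 0`
make `t ↦ w t / t` antitone, so `w t ≤ (t / M) * w M`. Either way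
`w t ^ p ≤ (1 + t ^ p / M ^ p) * w M ^ p`. With `t = |h x|` and `M = ‖h‖_p`, integrating against
the probability measure `μ` gives `∫ w(|h|) ^ p ≤ 2 * w(‖h‖_p) ^ p`.
-/

open MeasureTheory Set

section ConcaveOnIci

variable {w : ℝ → ℝ}

lemma MonotoneOn.nonneg_of_map_zero (hw_mono : MonotoneOn w (Ici 0)) (hw0 : w 0 = 0)
    {t : ℝ} (ht : 0 ≤ t) : 0 ≤ w t :=
  hw0 ▸ hw_mono self_mem_Ici ht ht

lemma ConcaveOn.le_div_mul_of_le (hw : ConcaveOn ℝ (Ici 0) w) (hw0 : w 0 = 0)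
    {M t : ℝ} (hM : 0 < M) (hMt : M ≤ t) : w t ≤ t / M * w M := by
  have ht : 0 < t := hM.trans_le hMt
  have hslope : w t / t ≤ w M / M := by
    simpa only [slope_def_field, hw0, sub_zero] using
      hw.slope_anti self_mem_Ici ⟨hM.le, hM.ne'⟩ ⟨ht.le, ht.ne'⟩ hMt
  rw [div_le_div_iff₀ ht hM] at hslope
  rw [div_mul_eq_mul_div, le_div_iff₀ hM]
  linarith

lemma rpow_le_one_add_rpow_div_mul (hw_mono : MonotoneOn w (Ici 0))
    (hw : ConcaveOn ℝ (Ici 0) w) (hw0 : w 0 = 0) {p M t : ℝ} (hp : 0 < p) (hM : 0 < M)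
    (ht : 0 ≤ t) : w t ^ p ≤ (1 + t ^ p / M ^ p) * w M ^ p := by
  have hwt := hw_mono.nonneg_of_map_zero hw0 ht
  have hwM := hw_mono.nonneg_of_map_zero hw0 hM.le
  have hbound : w t ^ p ≤ w M ^ p ∨ w t ^ p ≤ t ^ p / M ^ p * w M ^ p := by
    rcases le_total t M with htM | hMt
    · exact .inl <| Real.rpow_le_rpow hwt (hw_mono ht hM.le htM) hp.le
    · refine .inr ?_
      rw [← Real.div_rpow ht hM.le, ← Real.mul_rpow (by positivity) hwM]
      exact Real.rpow_le_rpow hwt (hw.le_div_mul_of_le hw0 hM hMt) hp.le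
  have : 0 ≤ t ^ p / M ^ p := by positivity
  have : 0 ≤ w M ^ p := by positivity
  rcases hbound with h | h <;> nlinarith

lemma integral_rpow_comp_abs_le_two_mul {E : Type*} [MeasurableSpace E] {μ : Measure E}
    [IsProbabilityMeasure μ] (hw_mono : MonotoneOn w (Ici 0)) (hw : ConcaveOn ℝ (Ici 0) w)
    (hw0 : w 0 = 0) {p : ℝ} (hp : 0 < p) {h : E → ℝ}
    (hint : Integrable (fun x => |h x| ^ p) μ) :
    ∫ x, w |h x| ^ p ∂μ ≤ 2 * w ((∫ x, |h x| ^ p ∂μ) ^ (1 / p)) ^ p := by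
  set A := ∫ x, |h x| ^ p ∂μ
  have hA : 0 ≤ A := integral_nonneg fun x => by positivity
  have hwh_nonneg : ∀ x, 0 ≤ w |h x| ^ p := fun x =>
    Real.rpow_nonneg (hw_mono.nonneg_of_map_zero hw0 (abs_nonneg _)) p
  rcases hA.eq_or_lt with hA0 | hApos
  · have hh_zero : (fun x => |h x| ^ p) =ᵐ[μ] 0 :=
      (integral_eq_zero_iff_of_nonneg (fun x => by positivity) hint).1 hA0.symm
    rw [← hA0, Real.zero_rpow (one_div_ne_zero hp.ne'), hw0, Real.zero_rpow hp.ne', mul_zero]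
    refine (integral_eq_zero_of_ae ?_).le
    filter_upwards [hh_zero] with x hx
    rw [Pi.zero_apply, Real.rpow_eq_zero (abs_nonneg _) hp.ne'] at hx
    rw [hx, hw0, Pi.zero_apply, Real.zero_rpow hp.ne']
  · set M := A ^ (1 / p)
    have hM : 0 < M := Real.rpow_pos_of_pos hApos _
    have hMp : M ^ p = A := by rw [← Real.rpow_mul hA, one_div_mul_cancel hp.ne', Real.rpow_one]
    calc ∫ x, w |h x| ^ p ∂μ ≤ ∫ x, (1 + |h x| ^ p / M ^ p) * w M ^ p ∂μ :=
          integral_mono_of_nonneg (ae_of_all _ hwh_nonneg)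
            (((integrable_const 1).add (hint.div_const _)).mul_const _)
            (ae_of_all _ fun x => rpow_le_one_add_rpow_div_mul hw_mono hw hw0 hp hM (abs_nonneg _))
      _ = 2 * w M ^ p := by
          rw [integral_mul_const, integral_add (integrable_const 1) (hint.div_const _),
            integral_div, hMp, div_self hApos.ne', integral_const, probReal_univ, one_smul,
            one_add_one_eq_two]

end ConcaveOnIci

theorem stmt_1_general {E : Type*} [MeasurableSpace E] (μ : Measure E) [IsProbabilityMeasure μ]
    (p : ℝ) (hp : 1 ≤ p) (w : ℝ → ℝ)
    (hw_mono : MonotoneOn w (Ici 0))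
    (hw_concave : ConcaveOn ℝ (Ici 0) w) (hw0 : w 0 = 0)
    (h : E → ℝ)
    (hint : Integrable (fun x => |h x| ^ p) μ) :
    (∫ x, (w |h x|) ^ p ∂μ) ^ (1 / p)
      ≤ 2 ^ (1 / p) * w ((∫ x, |h x| ^ p ∂μ) ^ (1 / p)) := by
  have hp0 : 0 < p := by linarith
  have hA : 0 ≤ ∫ x, |h x| ^ p ∂μ := integral_nonneg fun x => by positivity
  have hwM := hw_mono.nonneg_of_map_zero hw0 (Real.rpow_nonneg hA (1 / p))
  calc (∫ x, (w |h x|) ^ p ∂μ) ^ (1 / p)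
      ≤ (2 * w ((∫ x, |h x| ^ p ∂μ) ^ (1 / p)) ^ p) ^ (1 / p) :=
        Real.rpow_le_rpow (integral_nonneg fun x => Real.rpow_nonneg
            (hw_mono.nonneg_of_map_zero hw0 (abs_nonneg _)) p)
          (integral_rpow_comp_abs_le_two_mul hw_mono hw_concave hw0 hp0 hint) (by positivity)
    _ = 2 ^ (1 / p) * w ((∫ x, |h x| ^ p ∂μ) ^ (1 / p)) := by
        rw [Real.mul_rpow zero_le_two (by positivity), ← Real.rpow_mul hwM,
          mul_one_div_cancel hp0.ne', Real.rpow_one]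

theorem stmt_1 {E : Type*} [MeasurableSpace E] (μ : Measure E) [IsProbabilityMeasure μ]
    (p : ℝ) (hp : 1 ≤ p) (w : ℝ → ℝ)
    (hw_mono : MonotoneOn w (Ici 0)) (hw_nonneg : ∀ z ∈ Ici (0:ℝ), 0 ≤ w z)
    (hw_concave : ConcaveOn ℝ (Ici 0) w) (hw0 : w 0 = 0)
    (h : E → ℝ) (hmeas : Measurable h)
    (hint : Integrable (fun x => |h x| ^ p) μ)
    (hint' : Integrable (fun x => (w |h x|) ^ p) μ) :
    (∫ x, (w |h x|) ^ p ∂μ) ^ (1 / p)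
      ≤ 2 ^ (1 / p) * w ((∫ x, |h x| ^ p ∂μ) ^ (1 / p)) :=
  stmt_1_general μ p hp w hw_mono hw_concave hw0 h hint
end

section
/- Let (E, μ) be a probability space, p ∈ [1, ∞), l ≥ 1 an integer. Let g : [-1,1]^l → ℝ be continuous with modulus of continuity (w_{g,1}, ..., w_{g,l}), i.e., each w_{g,j} : [0,2] → ℝ₊ is continuous, nondecreasing, concave with w_{g,j}(0)=0, and |g(x) - g(y)| ≤ Σ_{j=1}^l w_{g,j}(|x_j - y_j|) for all x, y ∈ [-1,1]^l. Let f : [-1,1]^l → ℝ be bounded, and let t, u : E → [-1,1]^l be measurable. Then ‖g∘u - f∘t‖_p ≤ sup_{z ∈ [-1,1]^l} |g(z) - f(z)| + 2^{1/p} Σ_{j=1}^l w_{g,j}(‖u_j - t_j‖_p). -/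
open MeasureTheory Set
open scoped ENNReal

/-!
Pointwise, `|g (u x) - f (t x)| ≤ d_∞(g, f) + ∑ j, w_j |u_j x - t_j x|`, so by Minkowski it
suffices to show `‖w ∘ |d|‖_p ≤ 2^{1/p} w(‖d‖_p)` for a nondecreasing concave `w` with
`w 0 = 0`. For `a = ‖d‖_p > 0`, monotonicity below `a` and the antitone slope `w s / s` above `a`
give `w s ^ p ≤ w a ^ p + (w a / a) ^ p * s ^ p`; integrating against a probability measure,
`∫ w(|d|)^p ≤ 2 w(a)^p`.
-/

lemma ConcaveOn.apply_le_div_mul_of_le {b a s : ℝ} {w : ℝ → ℝ}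
    (hconc : ConcaveOn ℝ (Icc 0 b) w) (hw0 : w 0 = 0) (ha : 0 < a) (has : a ≤ s) (hs : s ≤ b) :
    w s ≤ w a / a * s := by
  have hslope := hconc.antitoneOn_slope_gt (left_mem_Icc.2 (ha.le.trans (has.trans hs)))
    ⟨⟨ha.le, has.trans hs⟩, ha⟩ ⟨⟨ha.le.trans has, hs⟩, ha.trans_le has⟩ has
  simp only [slope_def_field, hw0, sub_zero] at hslope
  rwa [div_le_iff₀ (ha.trans_le has)] at hslope

lemma MonotoneOn.nonneg_of_apply_zero {b : ℝ} {w : ℝ → ℝ} (hmono : MonotoneOn w (Icc 0 b))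
    (hw0 : w 0 = 0) {z : ℝ} (hz : z ∈ Icc 0 b) : 0 ≤ w z :=
  hw0 ▸ hmono ⟨le_rfl, hz.1.trans hz.2⟩ hz hz.1

lemma rpow_apply_le_of_concaveOn {b a s p : ℝ} {w : ℝ → ℝ} (hmono : MonotoneOn w (Icc 0 b))
    (hconc : ConcaveOn ℝ (Icc 0 b) w) (hw0 : w 0 = 0) (hp : 0 ≤ p) (ha : a ∈ Ioc 0 b)
    (hs : s ∈ Icc 0 b) :
    w s ^ p ≤ w a ^ p + (w a / a) ^ p * s ^ p := by
  have hwa := hmono.nonneg_of_apply_zero hw0 (Ioc_subset_Icc_self ha)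
  have hws := hmono.nonneg_of_apply_zero hw0 hs
  rcases le_total s a with hsa | has
  · calc w s ^ p ≤ w a ^ p :=
          Real.rpow_le_rpow hws (hmono hs (Ioc_subset_Icc_self ha) hsa) hp
      _ ≤ _ := le_add_of_nonneg_right <|
          mul_nonneg (Real.rpow_nonneg (div_nonneg hwa ha.1.le) _) (Real.rpow_nonneg hs.1 _)
  · calc w s ^ p ≤ (w a / a * s) ^ p :=
          Real.rpow_le_rpow hws (hconc.apply_le_div_mul_of_le hw0 ha.1 has hs.2) hp
      _ = (w a / a) ^ p * s ^ p := Real.mul_rpow (div_nonneg hwa ha.1.le) hs.1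
      _ ≤ _ := le_add_of_nonneg_left (Real.rpow_nonneg hwa _)

lemma ContinuousOn.measurable_comp {α X Y : Type*} [MeasurableSpace α] [TopologicalSpace X]
    [MeasurableSpace X] [OpensMeasurableSpace X] [TopologicalSpace Y] [MeasurableSpace Y]
    [BorelSpace Y] {s : Set X} {w : X → Y} (hw : ContinuousOn w s) {d : α → X}
    (hd : Measurable d) (hds : ∀ x, d x ∈ s) : Measurable fun x => w (d x) :=
  hw.domRestrict.measurable.comp (hd.subtype_mk (h := hds))

lemma abs_sub_le_iSup_of_continuousOn {X : Type*} [TopologicalSpace X] {K : Set X}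
    (hK : IsCompact K) {g f : X → ℝ} (hg : ContinuousOn g K) (hf : ∃ M, ∀ z ∈ K, |f z| ≤ M)
    {z : X} (hz : z ∈ K) : |g z - f z| ≤ ⨆ y : K, |g y - f y| := by
  obtain ⟨C, hC⟩ := hK.exists_bound_of_continuousOn hg
  obtain ⟨M, hM⟩ := hf
  refine le_ciSup (f := fun y : K => |g y - f y|) ⟨C + M, ?_⟩ ⟨z, hz⟩
  rintro _ ⟨y, rfl⟩
  exact (abs_sub _ _).trans (add_le_add (hC y y.2) (hM y y.2))

section

variable {α : Type*} [MeasurableSpace α] {μ : Measure α}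

lemma eLpNorm_ofReal_eq_integral_rpow {p : ℝ} (hp : 0 < p) {h : α → ℝ}
    (hint : Integrable (fun x => |h x| ^ p) μ) :
    eLpNorm h (ENNReal.ofReal p) μ = ENNReal.ofReal ((∫ x, |h x| ^ p ∂μ) ^ (1 / p)) := by
  rw [eLpNorm_eq_lintegral_rpow_enorm_toReal (by simpa using hp) ENNReal.ofReal_ne_top,
    ENNReal.toReal_ofReal hp.le,
    ← ENNReal.ofReal_rpow_of_nonneg (integral_nonneg fun _ => by positivity) (by positivity),
    ofReal_integral_eq_lintegral_ofReal hint (ae_of_all _ fun _ => by positivity)]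
  congr 2 with x
  rw [Real.enorm_eq_ofReal_abs, ENNReal.ofReal_rpow_of_nonneg (abs_nonneg _) hp.le]

lemma eLpNorm_le_ofReal_of_forall_abs_le [IsProbabilityMeasure μ] {p : ℝ≥0∞} {d : α → ℝ} {b : ℝ}
    (hdb : ∀ x, |d x| ≤ b) : eLpNorm d p μ ≤ ENNReal.ofReal b := by
  simpa using eLpNorm_le_of_ae_bound (p := p) (μ := μ)
    (ae_of_all _ fun x => (Real.norm_eq_abs (d x)).trans_le (hdb x))

lemma toReal_eLpNorm_le_of_forall_abs_le [IsProbabilityMeasure μ] {p : ℝ≥0∞} {d : α → ℝ} {b : ℝ}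
    (hdb : ∀ x, |d x| ≤ b) : (eLpNorm d p μ).toReal ≤ b :=
  ENNReal.toReal_le_of_le_ofReal
    ((abs_nonneg _).trans (hdb (nonempty_of_isProbabilityMeasure μ).some))
    (eLpNorm_le_ofReal_of_forall_abs_le hdb)

lemma ofReal_toReal_eLpNorm_of_forall_abs_le [IsProbabilityMeasure μ] {p : ℝ≥0∞} {d : α → ℝ}
    {b : ℝ} (hdb : ∀ x, |d x| ≤ b) : ENNReal.ofReal (eLpNorm d p μ).toReal = eLpNorm d p μ :=
  ENNReal.ofReal_toReal (ne_top_of_le_ne_top ENNReal.ofReal_ne_top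
    (eLpNorm_le_ofReal_of_forall_abs_le hdb))

lemma lintegral_enorm_comp_abs_rpow_le_of_concaveOn [IsProbabilityMeasure μ] {p b : ℝ}
    (hp : 0 < p) {w : ℝ → ℝ} (hmono : MonotoneOn w (Icc 0 b)) (hconc : ConcaveOn ℝ (Icc 0 b) w)
    (hw0 : w 0 = 0) {d : α → ℝ} (hdb : ∀ x, |d x| ≤ b)
    (ha : 0 < (eLpNorm d (ENNReal.ofReal p) μ).toReal) :
    ∫⁻ x, ‖w |d x|‖ₑ ^ p ∂μ
      ≤ ENNReal.ofReal (2 * w (eLpNorm d (ENNReal.ofReal p) μ).toReal ^ p) := by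
  set a := (eLpNorm d (ENNReal.ofReal p) μ).toReal
  have hab : a ≤ b := toReal_eLpNorm_le_of_forall_abs_le hdb
  have hwa := hmono.nonneg_of_apply_zero hw0 ⟨ha.le, hab⟩
  calc ∫⁻ x, ‖w |d x|‖ₑ ^ p ∂μ
      ≤ ∫⁻ x, ENNReal.ofReal (w a ^ p) + ENNReal.ofReal ((w a / a) ^ p) * ‖d x‖ₑ ^ p ∂μ := by
        refine lintegral_mono fun x => ?_
        have hdx : |d x| ∈ Icc 0 b := ⟨abs_nonneg _, hdb x⟩
        have hwdx := hmono.nonneg_of_apply_zero hw0 hdx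
        rw [Real.enorm_eq_ofReal hwdx, Real.enorm_eq_ofReal_abs,
          ENNReal.ofReal_rpow_of_nonneg hwdx hp.le,
          ENNReal.ofReal_rpow_of_nonneg (abs_nonneg _) hp.le, ← ENNReal.ofReal_mul (by positivity),
          ← ENNReal.ofReal_add (by positivity) (by positivity)]
        exact ENNReal.ofReal_le_ofReal
          (rpow_apply_le_of_concaveOn hmono hconc hw0 hp.le ⟨ha, hab⟩ hdx)
    _ = ENNReal.ofReal (w a ^ p) + ENNReal.ofReal ((w a / a) ^ p) * ENNReal.ofReal a ^ p := by
        rw [lintegral_add_left measurable_const, lintegral_const_mul' _ _ ENNReal.ofReal_ne_top,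
          lintegral_const, measure_univ, mul_one, lintegral_rpow_enorm_eq_rpow_eLpNorm' hp,
          ofReal_toReal_eLpNorm_of_forall_abs_le hdb,
          eLpNorm_eq_eLpNorm' (by simpa using hp) ENNReal.ofReal_ne_top,
          ENNReal.toReal_ofReal hp.le]
    _ = ENNReal.ofReal (2 * w a ^ p) := by
        rw [ENNReal.ofReal_rpow_of_nonneg ha.le hp.le, ← ENNReal.ofReal_mul (by positivity),
          ← ENNReal.ofReal_add (by positivity) (by positivity),
          ← Real.mul_rpow (div_nonneg hwa ha.le) ha.le, div_mul_cancel₀ _ ha.ne', two_mul]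

lemma eLpNorm_comp_abs_le_of_concaveOn [IsProbabilityMeasure μ] {p b : ℝ} (hp : 0 < p)
    {w : ℝ → ℝ} (hmono : MonotoneOn w (Icc 0 b)) (hconc : ConcaveOn ℝ (Icc 0 b) w)
    (hw0 : w 0 = 0) {d : α → ℝ} (hd : AEStronglyMeasurable d μ) (hdb : ∀ x, |d x| ≤ b) :
    eLpNorm (fun x => w |d x|) (ENNReal.ofReal p) μ
      ≤ ENNReal.ofReal (2 ^ (1 / p) * w (eLpNorm d (ENNReal.ofReal p) μ).toReal) := by
  have hq0 : ENNReal.ofReal p ≠ 0 := by simpa using hp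
  set a := (eLpNorm d (ENNReal.ofReal p) μ).toReal
  rcases (ENNReal.toReal_nonneg : 0 ≤ a).eq_or_lt with ha | ha
  · have hd0 : d =ᵐ[μ] 0 := by
      rw [← eLpNorm_eq_zero_iff hd hq0, ← ofReal_toReal_eLpNorm_of_forall_abs_le hdb]
      exact ENNReal.ofReal_eq_zero.2 ha.ge
    have hwd0 : (fun x => w |d x|) =ᵐ[μ] 0 := by
      filter_upwards [hd0] with x hx
      simp [hx, hw0]
    rw [eLpNorm_congr_ae hwd0, eLpNorm_zero]
    exact zero_le
  have hwa := hmono.nonneg_of_apply_zero hw0 ⟨ha.le, toReal_eLpNorm_le_of_forall_abs_le hdb⟩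
  rw [eLpNorm_eq_lintegral_rpow_enorm_toReal hq0 ENNReal.ofReal_ne_top,
    ENNReal.toReal_ofReal hp.le]
  calc (∫⁻ x, ‖w |d x|‖ₑ ^ p ∂μ) ^ (1 / p) ≤ ENNReal.ofReal (2 * w a ^ p) ^ (1 / p) :=
        ENNReal.rpow_le_rpow
          (lintegral_enorm_comp_abs_rpow_le_of_concaveOn hp hmono hconc hw0 hdb ha)
          (by positivity)
    _ = ENNReal.ofReal (2 ^ (1 / p) * w a) := by
      rw [ENNReal.ofReal_rpow_of_nonneg (by positivity) (by positivity),
        Real.mul_rpow zero_le_two (by positivity), ← Real.rpow_mul hwa,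
        mul_one_div_cancel hp.ne', Real.rpow_one]

lemma eLpNorm_le_ofReal_add_sum_of_abs_le [IsProbabilityMeasure μ] {ι : Type*} {s : Finset ι}
    {p : ℝ≥0∞} (hp : 1 ≤ p) {h : α → ℝ} {c : ℝ} (hc : 0 ≤ c) {F : ι → α → ℝ}
    (hF : ∀ j ∈ s, AEStronglyMeasurable (F j) μ) (hle : ∀ x, |h x| ≤ c + ∑ j ∈ s, F j x) :
    eLpNorm h p μ ≤ ENNReal.ofReal c + ∑ j ∈ s, eLpNorm (F j) p μ := by
  have hsplit : (fun x => c + ∑ j ∈ s, F j x) = (fun _ => c) + ∑ j ∈ s, F j := by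
    ext x
    simp [Finset.sum_apply]
  calc eLpNorm h p μ ≤ eLpNorm (fun x => c + ∑ j ∈ s, F j x) p μ := eLpNorm_mono_real hle
    _ ≤ eLpNorm (fun _ => c) p μ + eLpNorm (∑ j ∈ s, F j) p μ := by
      rw [hsplit]
      exact eLpNorm_add_le aestronglyMeasurable_const (Finset.aestronglyMeasurable_sum _ hF) hp
    _ ≤ ENNReal.ofReal c + ∑ j ∈ s, eLpNorm (F j) p μ := by
      gcongr
      · simp [eLpNorm_const _ (zero_lt_one.trans_le hp).ne' (NeZero.ne μ), Real.enorm_eq_ofReal hc]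
      · exact eLpNorm_sum_le hF hp

lemma toReal_eLpNorm_le_of_le_add_sum_concaveOn [IsProbabilityMeasure μ] {ι : Type*}
    [Fintype ι] {p b c : ℝ} (hp : 1 ≤ p) (hc : 0 ≤ c) {w : ι → ℝ → ℝ}
    (hw_cont : ∀ j, ContinuousOn (w j) (Icc 0 b)) (hw_mono : ∀ j, MonotoneOn (w j) (Icc 0 b))
    (hw_concave : ∀ j, ConcaveOn ℝ (Icc 0 b) (w j)) (hw0 : ∀ j, w j 0 = 0)
    {d : ι → α → ℝ} (hd : ∀ j, Measurable (d j)) (hdb : ∀ j x, |d j x| ≤ b) {h : α → ℝ}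
    (hle : ∀ x, |h x| ≤ c + ∑ j, w j |d j x|) :
    (eLpNorm h (ENNReal.ofReal p) μ).toReal
      ≤ c + 2 ^ (1 / p) * ∑ j, w j (eLpNorm (d j) (ENNReal.ofReal p) μ).toReal := by
  have hp0 : 0 < p := zero_lt_one.trans_le hp
  have hwa : ∀ j, 0 ≤ 2 ^ (1 / p) * w j (eLpNorm (d j) (ENNReal.ofReal p) μ).toReal := fun j =>
    mul_nonneg (by positivity) <| (hw_mono j).nonneg_of_apply_zero (hw0 j)
      ⟨ENNReal.toReal_nonneg, toReal_eLpNorm_le_of_forall_abs_le (hdb j)⟩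
  have hsum : 0 ≤ ∑ j, 2 ^ (1 / p) * w j (eLpNorm (d j) (ENNReal.ofReal p) μ).toReal :=
    Finset.sum_nonneg fun j _ => hwa j
  rw [Finset.mul_sum]
  refine ENNReal.toReal_le_of_le_ofReal (add_nonneg hc hsum) ?_
  calc eLpNorm h (ENNReal.ofReal p) μ
      ≤ ENNReal.ofReal c + ∑ j, eLpNorm (fun x => w j |d j x|) (ENNReal.ofReal p) μ :=
        eLpNorm_le_ofReal_add_sum_of_abs_le (by simpa using hp) hc
          (fun j _ => ((hw_cont j).measurable_comp (hd j).abs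
            fun x => ⟨abs_nonneg _, hdb j x⟩).aestronglyMeasurable) hle
    _ ≤ ENNReal.ofReal c + ∑ j, ENNReal.ofReal
          (2 ^ (1 / p) * w j (eLpNorm (d j) (ENNReal.ofReal p) μ).toReal) := by
        gcongr with j
        exact eLpNorm_comp_abs_le_of_concaveOn hp0 (hw_mono j) (hw_concave j) (hw0 j)
          (hd j).aestronglyMeasurable (hdb j)
    _ = _ := by rw [ENNReal.ofReal_add hc hsum, ENNReal.ofReal_sum_of_nonneg fun j _ => hwa j]

end

theorem stmt_3_general {E : Type*} [MeasurableSpace E] (μ : Measure E) [IsProbabilityMeasure μ]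
    (p : ℝ) (hp : 1 ≤ p) (l : ℕ)
    (g f : (Fin l → ℝ) → ℝ) (w : Fin l → ℝ → ℝ)
    (hg_cont : ContinuousOn g (Set.pi univ (fun _ => Icc (-1:ℝ) 1)))
    (hf_bdd : ∃ M : ℝ, ∀ z ∈ Set.pi univ (fun _ => Icc (-1:ℝ) 1), |f z| ≤ M)
    (hw_cont : ∀ j, ContinuousOn (w j) (Icc (0:ℝ) 2))
    (hw_mono : ∀ j, MonotoneOn (w j) (Icc (0:ℝ) 2))
    (hw_concave : ∀ j, ConcaveOn ℝ (Icc (0:ℝ) 2) (w j))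
    (hw0 : ∀ j, w j 0 = 0)
    (hmod : ∀ x y : Fin l → ℝ, (∀ j, x j ∈ Icc (-1:ℝ) 1) → (∀ j, y j ∈ Icc (-1:ℝ) 1) →
      |g x - g y| ≤ ∑ j, w j |x j - y j|)
    (u t : E → Fin l → ℝ)
    (hu : ∀ x, ∀ j, u x j ∈ Icc (-1:ℝ) 1) (ht : ∀ x, ∀ j, t x j ∈ Icc (-1:ℝ) 1)
    (hu_meas : Measurable u) (ht_meas : Measurable t)
    (hint : Integrable (fun x => |g (u x) - f (t x)| ^ p) μ)
    (hint' : ∀ j, Integrable (fun x => |u x j - t x j| ^ p) μ) :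
    (∫ x, |g (u x) - f (t x)| ^ p ∂μ) ^ (1 / p)
      ≤ (⨆ z : (Set.pi univ (fun _ : Fin l => Icc (-1:ℝ) 1)), |g z - f z|)
        + 2 ^ (1 / p) * ∑ j, w j ((∫ x, |u x j - t x j| ^ p ∂μ) ^ (1 / p)) := by
  have hp0 : 0 < p := zero_lt_one.trans_le hp
  set D := ⨆ z : (Set.pi univ (fun _ : Fin l => Icc (-1:ℝ) 1)), |g z - f z|
  have hD : ∀ y : Fin l → ℝ, (∀ j, y j ∈ Icc (-1:ℝ) 1) → |g y - f y| ≤ D := fun y hy =>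
    abs_sub_le_iSup_of_continuousOn (isCompact_univ_pi fun _ => isCompact_Icc) hg_cont hf_bdd
      fun j _ => hy j
  have hd2 : ∀ j x, |u x j - t x j| ≤ 2 := fun j x => abs_sub_le_iff.2
    ⟨by linarith [(hu x j).2, (ht x j).1], by linarith [(hu x j).1, (ht x j).2]⟩
  have hnorm : ∀ j, (∫ x, |u x j - t x j| ^ p ∂μ) ^ (1 / p)
      = (eLpNorm (fun x => u x j - t x j) (ENNReal.ofReal p) μ).toReal := fun j => by
    rw [eLpNorm_ofReal_eq_integral_rpow hp0 (hint' j), ENNReal.toReal_ofReal (by positivity)]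
  calc (∫ x, |g (u x) - f (t x)| ^ p ∂μ) ^ (1 / p)
      = (eLpNorm (fun x => g (u x) - f (t x)) (ENNReal.ofReal p) μ).toReal := by
        rw [eLpNorm_ofReal_eq_integral_rpow hp0 hint, ENNReal.toReal_ofReal (by positivity)]
    _ ≤ D + 2 ^ (1 / p) * ∑ j, w j (eLpNorm (fun x => u x j - t x j) (ENNReal.ofReal p) μ).toReal :=
        toReal_eLpNorm_le_of_le_add_sum_concaveOn hp
          ((abs_nonneg _).trans (hD 0 fun _ => by norm_num))
          hw_cont hw_mono hw_concave hw0 (fun j => by fun_prop) hd2 fun x => by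
            linarith [abs_sub_le (g (u x)) (g (t x)) (f (t x)), hmod (u x) (t x) (hu x) (ht x),
              hD (t x) (ht x)]
    _ = _ := by simp only [hnorm]

/-- Proposition: `‖g∘u - f∘t‖_p ≤ d_∞(g,f) + 2^{1/p} ∑_j w_{g,j}(‖u_j - t_j‖_p)`. -/
theorem stmt_3 {E : Type*} [MeasurableSpace E] (μ : Measure E) [IsProbabilityMeasure μ]
    (p : ℝ) (hp : 1 ≤ p) (l : ℕ) (hl : 1 ≤ l)
    (g f : (Fin l → ℝ) → ℝ) (w : Fin l → ℝ → ℝ)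
    (hg_cont : ContinuousOn g (Set.pi univ (fun _ => Icc (-1:ℝ) 1)))
    (hf_bdd : ∃ M : ℝ, ∀ z ∈ Set.pi univ (fun _ => Icc (-1:ℝ) 1), |f z| ≤ M)
    (hw_cont : ∀ j, ContinuousOn (w j) (Icc (0:ℝ) 2))
    (hw_mono : ∀ j, MonotoneOn (w j) (Icc (0:ℝ) 2))
    (hw_concave : ∀ j, ConcaveOn ℝ (Icc (0:ℝ) 2) (w j))
    (hw_nonneg : ∀ j, ∀ z ∈ Icc (0:ℝ) 2, 0 ≤ w j z)
    (hw0 : ∀ j, w j 0 = 0)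
    (hmod : ∀ x y : Fin l → ℝ, (∀ j, x j ∈ Icc (-1:ℝ) 1) → (∀ j, y j ∈ Icc (-1:ℝ) 1) →
      |g x - g y| ≤ ∑ j, w j |x j - y j|)
    (u t : E → Fin l → ℝ)
    (hu : ∀ x, ∀ j, u x j ∈ Icc (-1:ℝ) 1) (ht : ∀ x, ∀ j, t x j ∈ Icc (-1:ℝ) 1)
    (hu_meas : Measurable u) (ht_meas : Measurable t)
    (hint : Integrable (fun x => |g (u x) - f (t x)| ^ p) μ)
    (hint' : ∀ j, Integrable (fun x => |u x j - t x j| ^ p) μ) :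
    (∫ x, |g (u x) - f (t x)| ^ p ∂μ) ^ (1 / p)
      ≤ (⨆ z : (Set.pi univ (fun _ : Fin l => Icc (-1:ℝ) 1)), |g z - f z|)
        + 2 ^ (1 / p) * ∑ j, w j ((∫ x, |u x j - t x j| ^ p ∂μ) ^ (1 / p)) :=
  stmt_3_general μ p hp l g f w hg_cont hf_bdd hw_cont hw_mono hw_concave hw0 hmod u t hu ht hu_meas
    ht_meas hint hint'
end

section
/- Define φ(x, y) = xy if max(x,y) ≤ 1 and φ(x,y) = min(x,y) otherwise, for x, y > 0. For α > 0 and β = (β₁, ..., β_k) ∈ (0,∞)^k, set θᵢ = φ(βᵢ, α). Then the harmonic mean θ̄ defined by 1/θ̄ = (1/k)Σᵢ 1/θᵢ satisfies θ̄ ≤ β̄·(α ∧ 1), where 1/β̄ = (1/k)Σᵢ 1/βᵢ, with equality if and only if max_{1≤i≤k} βᵢ ≤ α ∨ 1. -/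
open Finset

lemma stmt_4_aux (α : ℝ) (hα : 0 < α) (b : ℝ) (hb : 0 < b) :
    (if max b α ≤ 1 then b * α else min b α) ≤ b * min α 1 ∧
    ((if max b α ≤ 1 then b * α else min b α) = b * min α 1 ↔ b ≤ max α 1) ∧
    0 < (if max b α ≤ 1 then b * α else min b α) := by
  rcases le_or_gt α 1 with hα1 | hα1
  · rw [min_eq_left hα1]
    rcases le_or_gt b 1 with hb1 | hb1
    · rw [if_pos (max_le hb1 hα1)]
      exact ⟨le_refl _, ⟨fun _ => hb1.trans (le_max_right α 1), fun _ => rfl⟩, by positivity⟩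
    · rw [if_neg (not_le.mpr (lt_of_lt_of_le hb1 (le_max_left b α)))]
      have hmin : min b α = α := min_eq_right (hα1.trans hb1.le)
      have hM : max α 1 = 1 := max_eq_right hα1
      rw [hmin, hM]
      refine ⟨by nlinarith, ⟨fun he => by nlinarith, fun hle => by nlinarith⟩, hα⟩
  · rw [min_eq_right hα1.le, mul_one, max_eq_left hα1.le,
      if_neg (not_le.mpr (lt_of_lt_of_le hα1 (le_max_right b α)))]
    exact ⟨min_le_left _ _, min_eq_left_iff, lt_min hb hα⟩

theorem stmt_4 (k : ℕ) (hk : 1 ≤ k) (α : ℝ) (hα : 0 < α)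
    (β : Fin k → ℝ) (hβ : ∀ i, 0 < β i)
    (φ : ℝ → ℝ → ℝ)
    (hφ : ∀ x y : ℝ, φ x y = if max x y ≤ 1 then x * y else min x y)
    (θ : Fin k → ℝ) (hθ : ∀ i, θ i = φ (β i) α)
    (θbar βbar : ℝ)
    (hθbar : 1 / θbar = (1 / (k : ℝ)) * ∑ i, 1 / θ i)
    (hβbar : 1 / βbar = (1 / (k : ℝ)) * ∑ i, 1 / β i)
    (hθbar_pos : 0 < θbar) (hβbar_pos : 0 < βbar) :
    θbar ≤ βbar * min α 1 ∧ (θbar = βbar * min α 1 ↔ ∀ i, β i ≤ max α 1) := by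
  set m := min α 1 with hm
  have hm0 : 0 < m := lt_min hα one_pos
  have key : ∀ i, θ i ≤ β i * m ∧ (θ i = β i * m ↔ β i ≤ max α 1) ∧ 0 < θ i := by
    intro i; rw [hθ, hφ]; exact stmt_4_aux α hα (β i) (hβ i)
  have hθpos : ∀ i, 0 < θ i := fun i => (key i).2.2
  have hterm : ∀ i ∈ (univ : Finset (Fin k)), 1 / (β i * m) ≤ 1 / θ i := fun i _ =>
    one_div_le_one_div_of_le (hθpos i) (key i).1
  have hk0 : (0:ℝ) < (k : ℝ) := by exact_mod_cast hk
  have hsum' : ∑ i, 1/(β i * m) = (∑ i, 1/(β i)) * (1/m) := by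
    rw [Finset.sum_mul]
    refine Finset.sum_congr rfl fun i _ => ?_
    rw [one_div_mul_one_div]
  have hrw : 1/(βbar * m) = (1 / (k : ℝ)) * ∑ i, 1/(β i * m) := by
    rw [hsum', ← one_div_mul_one_div, hβbar, mul_assoc]
  have h1 : 1/(βbar*m) ≤ 1/θbar := by
    rw [hrw, hθbar]
    exact mul_le_mul_of_nonneg_left (Finset.sum_le_sum hterm) (by positivity)
  have hle : θbar ≤ βbar * m := le_of_one_div_le_one_div (by positivity) h1
  refine ⟨hle, ?_⟩
  constructor
  · intro he i
    have heq : (1 / (k : ℝ)) * ∑ i, 1/(β i * m) = (1 / (k : ℝ)) * ∑ i, 1/ θ i := by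
      rw [← hrw, ← hθbar, he]
    have hsumeq : ∑ i, 1/(β i * m) = ∑ i, 1/ θ i :=
      mul_left_cancel₀ (by positivity) heq
    have h2 := (Finset.sum_eq_sum_iff_of_le hterm).mp hsumeq i (mem_univ i)
    have hθeq : θ i = β i * m := by
      rw [div_eq_div_iff (mul_pos (hβ i) hm0).ne' (hθpos i).ne'] at h2
      simpa using h2
    exact (key i).2.1.mp hθeq
  · intro hall
    have hsumeq : ∑ i, 1/ θ i = ∑ i, 1/(β i * m) := by
      refine Finset.sum_congr rfl fun i _ => ?_
      rw [(key i).2.1.mpr (hall i)]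
    have : 1/θbar = 1/(βbar * m) := by rw [hθbar, hrw, hsumeq]
    rw [div_eq_div_iff hθbar_pos.ne' (by positivity : (βbar*m) ≠ 0)] at this
    simpa using this.symm
end

section
/- Let s : ℝ^k → ℝ satisfy |s(x) - s(y)| ≤ w(|x-y|) for a nondecreasing concave w : ℝ₊ → ℝ₊ with w(0)=0, let μ be a probability measure on E ⊂ ℝ^k, and let V be an affine subspace of ℝ^k with orthogonal projection Π_V. Then ∫_E |s(x) - s(Π_V x)|² dμ(x) ≤ 2·w²((∫_E |x - Π_V x|² dμ(x))^{1/2}). -/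
open MeasureTheory Set

theorem stmt_19 (k : ℕ)
    (μ : Measure (EuclideanSpace ℝ (Fin k))) [IsProbabilityMeasure μ]
    (w : ℝ → ℝ) (hw_mono : MonotoneOn w (Ici 0)) (hw_nonneg : ∀ z ∈ Ici (0:ℝ), 0 ≤ w z)
    (hw_concave : ConcaveOn ℝ (Ici 0) w) (hw0 : w 0 = 0)
    (s : EuclideanSpace ℝ (Fin k) → ℝ)
    (hs : ∀ x y : EuclideanSpace ℝ (Fin k), |s x - s y| ≤ w ‖x - y‖)
    (V : AffineSubspace ℝ (EuclideanSpace ℝ (Fin k)))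
    (proj : EuclideanSpace ℝ (Fin k) → EuclideanSpace ℝ (Fin k))
    (hproj_mem : ∀ x, proj x ∈ V)
    (hproj_closest : ∀ x, ∀ y ∈ V, dist x (proj x) ≤ dist x y)
    (hint₁ : Integrable (fun x => (s x - s (proj x)) ^ 2) μ)
    (hint₂ : Integrable (fun x => ‖x - proj x‖ ^ 2) μ) :
    ∫ x, (s x - s (proj x)) ^ 2 ∂μ
      ≤ 2 * (w (Real.sqrt (∫ x, ‖x - proj x‖ ^ 2 ∂μ))) ^ 2 := by
  set I := ∫ x, ‖x - proj x‖ ^ 2 ∂μ with hI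
  have hI0 : 0 ≤ I := integral_nonneg fun x => sq_nonneg _
  set a := Real.sqrt I with ha
  have ha0 : 0 ≤ a := Real.sqrt_nonneg _
  have ha2 : a ^ 2 = I := Real.sq_sqrt hI0
  have hwa0 : 0 ≤ w a := hw_nonneg a ha0
  rcases eq_or_lt_of_le ha0 with h0 | hpos
  · -- degenerate case a = 0
    have hIeq : I = 0 := by rw [← ha2, ← h0]; ring
    have hD : (fun x => ‖x - proj x‖ ^ 2) =ᵐ[μ] 0 :=
      (integral_eq_zero_iff_of_nonneg (fun x => sq_nonneg _) hint₂).mp hIeq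
    have hle : ∀ᵐ x ∂μ, (s x - s (proj x)) ^ 2 ≤ 0 := by
      filter_upwards [hD] with x hx
      have hx' : ‖x - proj x‖ ^ 2 = 0 := hx
      have hD0 : ‖x - proj x‖ = 0 := by nlinarith [norm_nonneg (x - proj x)]
      have h1 := hs x (proj x)
      rw [hD0, hw0] at h1
      nlinarith [abs_nonneg (s x - s (proj x)), sq_abs (s x - s (proj x))]
    have h1 : ∫ x, (s x - s (proj x)) ^ 2 ∂μ ≤ 0 := integral_nonpos_of_ae hle
    have h2 : (0:ℝ) ≤ 2 * (w a) ^ 2 := by positivity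
    linarith
  · -- main case a > 0
    have hIpos : 0 < I := by nlinarith
    have key : ∀ t : ℝ, 0 ≤ t → (w t) ^ 2 ≤ (w a) ^ 2 * (1 + t ^ 2 / a ^ 2) := by
      intro t ht
      have hwt0 : 0 ≤ w t := hw_nonneg t ht
      rcases le_or_gt t a with hta | hat
      · have h1 : w t ≤ w a := hw_mono ht ha0 hta
        have h2' : (0:ℝ) ≤ t ^ 2 / a ^ 2 := by positivity
        have h2 : (1:ℝ) ≤ 1 + t ^ 2 / a ^ 2 := by linarith
        nlinarith
      · have htpos : 0 < t := lt_trans hpos hat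
        have hl0 : (0:ℝ) ≤ a / t := by positivity
        have hl1 : (0:ℝ) ≤ 1 - a / t := by
          have : a / t ≤ 1 := (div_le_one htpos).mpr hat.le
          linarith
        have hc := hw_concave.2 (mem_Ici.mpr ht) (mem_Ici.mpr le_rfl) hl0 hl1 (by ring)
        simp only [smul_eq_mul, mul_zero, add_zero, hw0] at hc
        have heq : a / t * t = a := div_mul_cancel₀ a (ne_of_gt htpos)
        rw [heq] at hc
        -- hc : a / t * w t + (1 - a/t) * 0 ≤ w a, i.e. (a/t) * w t ≤ w a
        have hwt : a * w t ≤ t * w a := by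
          have := hc
          rw [div_mul_eq_mul_div] at this
          have := (div_le_iff₀ htpos).mp this
          nlinarith
        have h3 : (w t) ^ 2 ≤ (w a) ^ 2 * (t ^ 2 / a ^ 2) := by
          rw [mul_div_assoc'] at *
          rw [le_div_iff₀ (by positivity)]
          have hsq := mul_le_mul hwt hwt (by positivity) (by positivity : (0:ℝ) ≤ t * w a)
          nlinarith
        have h4 : (w a) ^ 2 * (t ^ 2 / a ^ 2) ≤ (w a) ^ 2 * (1 + t ^ 2 / a ^ 2) := by
          nlinarith [sq_nonneg (w a)]
        linarith
    have hpt : ∀ x, (s x - s (proj x)) ^ 2 ≤ (w a) ^ 2 * (1 + ‖x - proj x‖ ^ 2 / a ^ 2) := by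
      intro x
      have h1 := hs x (proj x)
      have h2 := key ‖x - proj x‖ (norm_nonneg _)
      have hwn := hw_nonneg ‖x - proj x‖ (mem_Ici.mpr (norm_nonneg _))
      nlinarith [sq_abs (s x - s (proj x)), abs_nonneg (s x - s (proj x))]
    have hintR : Integrable (fun x => (w a) ^ 2 * (1 + ‖x - proj x‖ ^ 2 / a ^ 2)) μ := by
      exact ((integrable_const (1:ℝ)).add (hint₂.div_const _)).const_mul _
    have hle := integral_mono hint₁ hintR hpt
    have hcalc : ∫ x, (w a) ^ 2 * (1 + ‖x - proj x‖ ^ 2 / a ^ 2) ∂μ = 2 * (w a) ^ 2 := by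
      rw [integral_const_mul, integral_add (integrable_const 1) (hint₂.div_const _),
        integral_const, integral_div]
      simp [← hI, ha2, hIpos.ne']
      ring
    rw [hcalc] at hle
    exact hle
end
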